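/- (Theorem 1, Case 4.) Fix an altitude ĥ > 0 and assume X > 0, SIR1(0,ĥ) ≥ SIR2(0,ĥ), Ψˣ(ĥ) < D, and SIR1(Ψˣ(ĥ),ĥ) ≤ SIR2(Ψˣ(ĥ),ĥ). Then the set S = {x ∈ [0,D] : SIR1(x,ĥ) = SIR2(x,ĥ)} is nonempty; letting x_sol be the smallest element of S, the following holds: if SIR1(x_sol,ĥ) ≥ SIR1(D,ĥ), then SIR_S(x,ĥ) ≤ SIR_S(x_sol,ĥ) for every x ∈ [0,D] (the optimal position is x* = x_sol); otherwise, SIR_S(x,ĥ) ≤ SIR_S(D,ĥ) for every x ∈ [0,D] (the optimal position is x* = D). -/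
import Mathlib


/-- SIR at the UAV located at (x,0,h). -/
noncomputable def SIR1 (pt pM X Y x h : ℝ) : ℝ :=
  pt * ((x - X) ^ 2 + Y ^ 2 + h ^ 2) / (pM * (x ^ 2 + h ^ 2))

/-- SIR at the Rx when the UAV is located at (x,0,h). -/
noncomputable def SIR2 (pu κ pM D X Y x h : ℝ) : ℝ :=
  pu * κ * (Y ^ 2 + (D - X) ^ 2) / (pM * ((D - x) ^ 2 + h ^ 2))

/-- SIR of the system. -/
noncomputable def SIRS (pt pu κ pM D X Y x h : ℝ) : ℝ :=
  min (SIR1 pt pM X Y x h) (SIR2 pu κ pM D X Y x h)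

/-- The horizontal stationary point Ψˣ(h). -/
noncomputable def PsiX (X Y h : ℝ) : ℝ :=
  (X ^ 2 + Y ^ 2 + Real.sqrt ((X ^ 2 + Y ^ 2) ^ 2 + 4 * X ^ 2 * h ^ 2)) / (2 * X)

set_option maxHeartbeats 1000000 in
theorem stmt9 (D X Y pt pu pM κ : ℝ) (hD : 0 < D) (hX0 : 0 ≤ X) (hXD : X ≤ D)
    (hpt : 0 < pt) (hpu : 0 < pu) (hpM : 0 < pM) (hκ : 0 < κ)
    (hhat : ℝ) (hhat_pos : 0 < hhat) (hX : 0 < X)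
    (hc1 : SIR1 pt pM X Y 0 hhat ≥ SIR2 pu κ pM D X Y 0 hhat)
    (hc2 : PsiX X Y hhat < D)
    (hc3 : SIR1 pt pM X Y (PsiX X Y hhat) hhat ≤ SIR2 pu κ pM D X Y (PsiX X Y hhat) hhat) :
    ∃ xsol ∈ {x ∈ Set.Icc (0 : ℝ) D | SIR1 pt pM X Y x hhat = SIR2 pu κ pM D X Y x hhat},
      (∀ x ∈ {x ∈ Set.Icc (0 : ℝ) D |
          SIR1 pt pM X Y x hhat = SIR2 pu κ pM D X Y x hhat}, xsol ≤ x) ∧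
      (SIR1 pt pM X Y xsol hhat ≥ SIR1 pt pM X Y D hhat →
        ∀ x ∈ Set.Icc (0 : ℝ) D,
          SIRS pt pu κ pM D X Y x hhat ≤ SIRS pt pu κ pM D X Y xsol hhat) ∧
      (SIR1 pt pM X Y xsol hhat < SIR1 pt pM X Y D hhat →
        ∀ x ∈ Set.Icc (0 : ℝ) D,
          SIRS pt pu κ pM D X Y x hhat ≤ SIRS pt pu κ pM D X Y D hhat) := by
  have hh2 : (0:ℝ) < hhat ^ 2 := by positivity
  set Ψ : ℝ := PsiX X Y hhat with hΨdef
  set Q : ℝ := Real.sqrt ((X ^ 2 + Y ^ 2) ^ 2 + 4 * X ^ 2 * hhat ^ 2) with hQdef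
  have hQnn : 0 ≤ Q := Real.sqrt_nonneg _
  have hQsq : Q ^ 2 = (X ^ 2 + Y ^ 2) ^ 2 + 4 * X ^ 2 * hhat ^ 2 := by
    rw [hQdef, Real.sq_sqrt (by positivity)]
  have hΨeq : Ψ = (X ^ 2 + Y ^ 2 + Q) / (2 * X) := by rw [hΨdef, hQdef, PsiX]
  have hΨpos : 0 < Ψ := by
    rw [hΨeq]
    apply div_pos (by positivity) (by positivity)
  have hΨid : X * Ψ ^ 2 = (X ^ 2 + Y ^ 2) * Ψ + X * hhat ^ 2 := by
    rw [hΨeq]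
    field_simp
    ring_nf
    nlinarith [hQsq]
  -- monotonicity of SIR1
  have hfdec : ∀ a b : ℝ, 0 ≤ a → a ≤ b → b ≤ Ψ →
      SIR1 pt pM X Y b hhat ≤ SIR1 pt pM X Y a hhat := by
    intro a b ha hab hbΨ
    have hb0 : 0 ≤ b := ha.trans hab
    have hΨa : 0 ≤ Ψ - a := by linarith
    have hΨb : 0 ≤ Ψ - b := by linarith
    have hBid : Ψ * ((X ^ 2 + Y ^ 2) * (a + b) + 2 * X * hhat ^ 2 - 2 * X * a * b)
        = X * Ψ * (a * (Ψ - b)) + X * Ψ * (b * (Ψ - a))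
          + X * hhat ^ 2 * ((Ψ - a) + (Ψ - b)) := by
      linear_combination (-(a + b)) * hΨid
    have h1 : 0 ≤ Ψ * ((X ^ 2 + Y ^ 2) * (a + b) + 2 * X * hhat ^ 2 - 2 * X * a * b) := by
      rw [hBid]
      have t1 := mul_nonneg (mul_nonneg hX.le hΨpos.le) (mul_nonneg ha hΨb)
      have t2 := mul_nonneg (mul_nonneg hX.le hΨpos.le) (mul_nonneg hb0 hΨa)
      have t3 := mul_nonneg (mul_nonneg hX.le hh2.le) (add_nonneg hΨa hΨb)
      linarith
    have hB : 0 ≤ (X ^ 2 + Y ^ 2) * (a + b) + 2 * X * hhat ^ 2 - 2 * X * a * b := by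
      nlinarith [h1, hΨpos]
    rw [SIR1, SIR1, div_le_div_iff₀ (by positivity) (by positivity)]
    nlinarith [mul_nonneg (mul_nonneg (mul_nonneg hpt.le hpM.le) (sub_nonneg.2 hab)) hB]
  have hfinc : ∀ a b : ℝ, Ψ ≤ a → a ≤ b →
      SIR1 pt pM X Y a hhat ≤ SIR1 pt pM X Y b hhat := by
    intro a b hΨa hab
    have ha0 : 0 ≤ a := hΨpos.le.trans hΨa
    have hb0 : 0 ≤ b := ha0.trans hab
    have haΨ : 0 ≤ a - Ψ := by linarith
    have hbΨ : 0 ≤ b - Ψ := by linarith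
    have hBid : Ψ * (2 * X * a * b - (X ^ 2 + Y ^ 2) * (a + b) - 2 * X * hhat ^ 2)
        = X * Ψ * (a * (b - Ψ)) + X * Ψ * (b * (a - Ψ))
          + X * hhat ^ 2 * ((a - Ψ) + (b - Ψ)) := by
      linear_combination ((a + b)) * hΨid
    have h1 : 0 ≤ Ψ * (2 * X * a * b - (X ^ 2 + Y ^ 2) * (a + b) - 2 * X * hhat ^ 2) := by
      rw [hBid]
      have t1 := mul_nonneg (mul_nonneg hX.le hΨpos.le) (mul_nonneg ha0 hbΨ)
      have t2 := mul_nonneg (mul_nonneg hX.le hΨpos.le) (mul_nonneg hb0 haΨ)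
      have t3 := mul_nonneg (mul_nonneg hX.le hh2.le) (add_nonneg haΨ hbΨ)
      linarith
    have hB : 0 ≤ 2 * X * a * b - (X ^ 2 + Y ^ 2) * (a + b) - 2 * X * hhat ^ 2 := by
      nlinarith [h1, hΨpos]
    rw [SIR1, SIR1, div_le_div_iff₀ (by positivity) (by positivity)]
    nlinarith [mul_nonneg (mul_nonneg (mul_nonneg hpt.le hpM.le) (sub_nonneg.2 hab)) hB]
  -- monotonicity of SIR2
  have hgmono : ∀ a b : ℝ, a ≤ b → b ≤ D →
      SIR2 pu κ pM D X Y a hhat ≤ SIR2 pu κ pM D X Y b hhat := by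
    intro a b hab hbD
    rw [SIR2, SIR2, div_le_div_iff₀ (by positivity) (by positivity)]
    have hnum : 0 ≤ pu * κ * (Y ^ 2 + (D - X) ^ 2) := by positivity
    have hsq : 0 ≤ (D - a) ^ 2 - (D - b) ^ 2 := by nlinarith
    nlinarith [mul_nonneg (mul_nonneg hnum hpM.le) hsq]
  -- continuity
  have hfc : Continuous (fun x => SIR1 pt pM X Y x hhat) := by
    unfold SIR1
    exact Continuous.div (by continuity) (by continuity) (fun x => by positivity)
  have hgc : Continuous (fun x => SIR2 pu κ pM D X Y x hhat) := by
    unfold SIR2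
    exact Continuous.div (by continuity) (by continuity) (fun x => by positivity)
  have hφc : Continuous (fun x => SIR1 pt pM X Y x hhat - SIR2 pu κ pM D X Y x hhat) :=
    hfc.sub hgc
  -- a crossing point in [0, Ψ]
  have hmem0 : (0:ℝ) ∈ Set.Icc
      (SIR1 pt pM X Y Ψ hhat - SIR2 pu κ pM D X Y Ψ hhat)
      (SIR1 pt pM X Y 0 hhat - SIR2 pu κ pM D X Y 0 hhat) := by
    constructor <;> simp only [sub_nonneg, sub_nonpos] <;> [exact hc3; exact hc1]
  obtain ⟨z, hzI, hz0⟩ := intermediate_value_Icc' hΨpos.le hφc.continuousOn hmem0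
  have hzeq : SIR1 pt pM X Y z hhat = SIR2 pu κ pM D X Y z hhat := by
    have := hz0
    simp only at this
    linarith
  set S := {x ∈ Set.Icc (0 : ℝ) D | SIR1 pt pM X Y x hhat = SIR2 pu κ pM D X Y x hhat}
    with hSdef
  have hzS : z ∈ S := ⟨⟨hzI.1, hzI.2.trans hc2.le⟩, hzeq⟩
  have hScl : IsClosed S := by
    have : S = Set.Icc (0:ℝ) D ∩ {x | SIR1 pt pM X Y x hhat = SIR2 pu κ pM D X Y x hhat} :=
      rfl
    rw [this]
    exact isClosed_Icc.inter (isClosed_eq hfc hgc)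
  have hScpt : IsCompact S :=
    IsCompact.of_isClosed_subset isCompact_Icc hScl (fun x hx => hx.1)
  obtain ⟨xsol, hxmem, hxlb⟩ := hScpt.exists_isLeast ⟨z, hzS⟩
  have hxsol0 : 0 ≤ xsol := hxmem.1.1
  have hxsolD : xsol ≤ D := hxmem.1.2
  have heq : SIR1 pt pM X Y xsol hhat = SIR2 pu κ pM D X Y xsol hhat := hxmem.2
  have hxsolΨ : xsol ≤ Ψ := (hxlb hzS).trans hzI.2
  -- on [0, xsol], SIR1 ≥ SIR2
  have hleft : ∀ x : ℝ, 0 ≤ x → x ≤ xsol →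
      SIR2 pu κ pM D X Y x hhat ≤ SIR1 pt pM X Y x hhat := by
    intro x hx0 hxx
    by_contra hcon
    push_neg at hcon
    have hmemx : (0:ℝ) ∈ Set.Icc
        (SIR1 pt pM X Y x hhat - SIR2 pu κ pM D X Y x hhat)
        (SIR1 pt pM X Y 0 hhat - SIR2 pu κ pM D X Y 0 hhat) := by
      constructor <;> simp only [sub_nonneg, sub_nonpos] <;> [exact hcon.le; exact hc1]
    obtain ⟨z', hz'I, hz'0⟩ := intermediate_value_Icc' hx0 hφc.continuousOn hmemx
    have hz'eq : SIR1 pt pM X Y z' hhat = SIR2 pu κ pM D X Y z' hhat := by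
      have := hz'0
      simp only at this
      linarith
    have hz'S : z' ∈ S := ⟨⟨hz'I.1, by linarith [hz'I.2]⟩, hz'eq⟩
    have h1 := hxlb hz'S
    have hxeq : x = xsol := le_antisymm hxx (by linarith [hz'I.2])
    rw [hxeq] at hcon
    exact absurd heq (ne_of_gt hcon).symm
  refine ⟨xsol, hxmem, fun x hx => hxlb hx, ?_, ?_⟩
  · intro hge x hx
    rw [SIRS, SIRS, heq, min_self]
    rcases le_total x xsol with hle | hge'
    · exact (min_le_right _ _).trans (hgmono x xsol hle hxsolD)
    · rcases le_total x Ψ with hleΨ | hgeΨ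
      · refine (min_le_left _ _).trans ?_
        rw [← heq]
        exact hfdec xsol x hxsol0 hge' hleΨ
      · refine (min_le_left _ _).trans ?_
        rw [← heq]
        exact (hfinc x D hgeΨ hx.2).trans hge
  · intro hlt x hx
    rw [SIRS, SIRS]
    refine le_min ?_ ((min_le_right _ _).trans (hgmono x D hx.2 le_rfl))
    rcases le_total x xsol with hle | hge'
    · refine (min_le_right _ _).trans ?_
      have := hgmono x xsol hle hxsolD
      rw [← heq] at this
      exact this.trans hlt.le
    · rcases le_total x Ψ with hleΨ | hgeΨ
      · exact (min_le_left _ _).trans ((hfdec xsol x hxsol0 hge' hleΨ).trans hlt.le)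
      · exact (min_le_left _ _).trans (hfinc x D hgeΨ hx.2)
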